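/- arXiv:2305.00634 — 3 statements merged into one kernel-verified Lean document; each statement's English description precedes it below -/
import Mathlib

section
/- Let B be a totally sign-skew-symmetric n×n integer matrix. Then for every finite sequence w of mutation indices, the G-matrix, exchange matrix and C-matrix of B at w satisfy the first duality G_w · B_w = B · C_w. -/
open Matrix

/-- Mutation of an integer matrix at index `k`. -/
def mutB {n : ℕ} (B : Matrix (Fin n) (Fin n) ℤ) (k : Fin n) : Matrix (Fin n) (Fin n) ℤ :=
  Matrix.of fun i j =>
    if i = k ∨ j = k then -B i j
    else B i j + (B i k).sign * max (B i k * B k j) 0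

/-- Sign-skew-symmetric matrix. -/
def SignSkew {n : ℕ} (B : Matrix (Fin n) (Fin n) ℤ) : Prop :=
  ∀ i j, B i j * B j i ≤ 0 ∧ (B i j * B j i = 0 → B i j = 0 ∧ B j i = 0)

/-- Entrywise positive part `[A]₊`. -/
def matPos {n : ℕ} (A : Matrix (Fin n) (Fin n) ℤ) : Matrix (Fin n) (Fin n) ℤ :=
  Matrix.of fun i j => max (A i j) 0

/-- `A^{k·}`: agrees with `A` in row `k`, zero elsewhere. -/
def rowSel {n : ℕ} (A : Matrix (Fin n) (Fin n) ℤ) (k : Fin n) : Matrix (Fin n) (Fin n) ℤ :=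
  Matrix.of fun i j => if i = k then A i j else 0

/-- `A^{·k}`: agrees with `A` in column `k`, zero elsewhere. -/
def colSel {n : ℕ} (A : Matrix (Fin n) (Fin n) ℤ) (k : Fin n) : Matrix (Fin n) (Fin n) ℤ :=
  Matrix.of fun i j => if j = k then A i j else 0

/-- `J_k`: identity matrix with the `(k,k)` entry replaced by `-1`. -/
def Jmat (n : ℕ) (k : Fin n) : Matrix (Fin n) (Fin n) ℤ :=
  Matrix.of fun i j => if i = j then (if i = k then -1 else 1) else 0

/-- One mutation step on a triple `(B_w, C_w, G_w)`, with fixed initial matrix `B0`: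
`B_{w·k} = μ_k(B_w)`, `C_{w·k} = C_w (J_k + [B_w]₊^{k·}) + [-C_w]₊^{·k} B_w`,
`G_{w·k} = G_w (J_k + [-B_w]₊^{·k}) - B0 [-C_w]₊^{·k}`. -/
def BCGstep {n : ℕ} (B0 : Matrix (Fin n) (Fin n) ℤ)
    (s : Matrix (Fin n) (Fin n) ℤ × Matrix (Fin n) (Fin n) ℤ × Matrix (Fin n) (Fin n) ℤ)
    (k : Fin n) :
    Matrix (Fin n) (Fin n) ℤ × Matrix (Fin n) (Fin n) ℤ × Matrix (Fin n) (Fin n) ℤ :=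
  (mutB s.1 k,
   s.2.1 * (Jmat n k + rowSel (matPos s.1) k) + colSel (matPos (-s.2.1)) k * s.1,
   s.2.2 * (Jmat n k + colSel (matPos (-s.1)) k) - B0 * colSel (matPos (-s.2.1)) k)

/-- The triple `(B_w, C_w, G_w)` associated to a mutation sequence `w`
(entries of `w` are applied from left to right). -/
def BCG {n : ℕ} (B : Matrix (Fin n) (Fin n) ℤ) (w : List (Fin n)) :
    Matrix (Fin n) (Fin n) ℤ × Matrix (Fin n) (Fin n) ℤ × Matrix (Fin n) (Fin n) ℤ :=
  w.foldl (BCGstep B) (B, 1, 1)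

/-- The exchange matrix `B_w` of `B` at the sequence `w`. -/
def Bmat {n : ℕ} (B : Matrix (Fin n) (Fin n) ℤ) (w : List (Fin n)) :
    Matrix (Fin n) (Fin n) ℤ := (BCG B w).1

/-- The `C`-matrix `C_w^B`. -/
def Cmat {n : ℕ} (B : Matrix (Fin n) (Fin n) ℤ) (w : List (Fin n)) :
    Matrix (Fin n) (Fin n) ℤ := (BCG B w).2.1

/-- The `G`-matrix `G_w^B`. -/
def Gmat {n : ℕ} (B : Matrix (Fin n) (Fin n) ℤ) (w : List (Fin n)) :
    Matrix (Fin n) (Fin n) ℤ := (BCG B w).2.2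

/-- Totally sign-skew-symmetric: every matrix obtained from `B` by a finite sequence of
mutations is sign-skew-symmetric. -/
def TotSSS {n : ℕ} (B : Matrix (Fin n) (Fin n) ℤ) : Prop :=
  ∀ w : List (Fin n), SignSkew (Bmat B w)

/-- The `j`-th column of `A` is sign-coherent with sign `ε`. -/
def ColHasSign {n : ℕ} (A : Matrix (Fin n) (Fin n) ℤ) (j : Fin n) (ε : ℤ) : Prop :=
  (∃ i, A i j ≠ 0) ∧ ((ε = 1 ∧ ∀ i, 0 ≤ A i j) ∨ (ε = -1 ∧ ∀ i, A i j ≤ 0))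

/-- The `j`-th column of `A` is sign-coherent. -/
def ColSignCoherent {n : ℕ} (A : Matrix (Fin n) (Fin n) ℤ) (j : Fin n) : Prop :=
  ∃ ε : ℤ, ColHasSign A j ε

/-- The `i`-th row of `A` is sign-coherent with sign `ε`. -/
def RowHasSign {n : ℕ} (A : Matrix (Fin n) (Fin n) ℤ) (i : Fin n) (ε : ℤ) : Prop :=
  (∃ j, A i j ≠ 0) ∧ ((ε = 1 ∧ ∀ j, 0 ≤ A i j) ∨ (ε = -1 ∧ ∀ j, A i j ≤ 0))

/-- The **Assumption**: for every matrix `B₀` obtained from `B` or `-B` by a finite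
sequence of mutations, every sequence `w` and every index `k`, the `k`-th columns of
`C_w^{B₀}` and `C_w^{-B₀ᵀ}` are both sign-coherent with the same sign. -/
def TheAssumption {n : ℕ} (B : Matrix (Fin n) (Fin n) ℤ) : Prop :=
  ∀ B0 : Matrix (Fin n) (Fin n) ℤ,
    ((∃ v : List (Fin n), B0 = Bmat B v) ∨ (∃ v : List (Fin n), B0 = Bmat (-B) v)) →
    ∀ (w : List (Fin n)) (k : Fin n),
      ∃ ε : ℤ, ColHasSign (Cmat B0 w) k ε ∧ ColHasSign (Cmat (-B0ᵀ) w) k ε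


private lemma colSel_mul_apply {n : ℕ} (A M : Matrix (Fin n) (Fin n) ℤ) (k i j : Fin n) :
    (colSel A k * M) i j = A i k * M k j := by
  simp [Matrix.mul_apply, colSel, ite_mul]

private lemma mul_rowSel_apply {n : ℕ} (M A : Matrix (Fin n) (Fin n) ℤ) (k i j : Fin n) :
    (M * rowSel A k) i j = M i k * A k j := by
  simp [Matrix.mul_apply, rowSel, mul_ite]

private lemma Jmat_mul_apply {n : ℕ} (M : Matrix (Fin n) (Fin n) ℤ) (k i j : Fin n) :
    (Jmat n k * M) i j = if i = k then -M i j else M i j := by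
  simp only [Matrix.mul_apply, Jmat, Matrix.of_apply, ite_mul, zero_mul, neg_mul, one_mul]
  rw [Finset.sum_eq_single i]
  · simp
  · intro b _ hb; simp [Ne.symm hb]
  · simp

private lemma mul_Jmat_apply {n : ℕ} (M : Matrix (Fin n) (Fin n) ℤ) (k i j : Fin n) :
    (M * Jmat n k) i j = if j = k then -M i j else M i j := by
  simp only [Matrix.mul_apply, Jmat, Matrix.of_apply, mul_ite, mul_zero, mul_neg, mul_one]
  rw [Finset.sum_eq_single j]
  · simp
  · intro b _ hb; simp [hb]
  · simp

private lemma scal (a b : ℤ) :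
    a.sign * max (a * b) 0 - max (-a) 0 * b = a * max b 0 := by
  rcases lt_trichotomy a 0 with ha | ha | ha
  · rw [Int.sign_eq_neg_one_of_neg ha, max_eq_left (by linarith : (0:ℤ) ≤ -a)]
    rcases le_total b 0 with hb | hb
    · rw [max_eq_right hb, max_eq_left (by nlinarith : (0:ℤ) ≤ a * b)]; ring
    · rw [max_eq_left hb, max_eq_right (by nlinarith : a * b ≤ (0:ℤ))]; ring
  · simp [ha]
  · rw [Int.sign_eq_one_of_pos ha, max_eq_right (by linarith : -a ≤ (0:ℤ))]
    rcases le_total b 0 with hb | hb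
    · rw [max_eq_right hb, max_eq_right (by nlinarith : a * b ≤ (0:ℤ))]; ring
    · rw [max_eq_left hb, max_eq_left (by nlinarith : (0:ℤ) ≤ a * b)]; ring

private lemma key_identity {n : ℕ} (Bw : Matrix (Fin n) (Fin n) ℤ) (k : Fin n)
    (hkk : Bw k k = 0) :
    (Jmat n k + colSel (matPos (-Bw)) k) * mutB Bw k
      = Bw * (Jmat n k + rowSel (matPos Bw) k) := by
  ext i j
  rw [Matrix.add_mul, Matrix.mul_add, Matrix.add_apply, Matrix.add_apply,
    colSel_mul_apply, mul_rowSel_apply, Jmat_mul_apply, mul_Jmat_apply]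
  simp only [matPos, mutB, Matrix.of_apply, Matrix.neg_apply]
  rcases eq_or_ne i k with hi | hi
  · rcases eq_or_ne j k with hj | hj <;> simp [hi, hj, hkk]
  · rcases eq_or_ne j k with hj | hj
    · subst hj
      simp [hi, hkk]
    · simp only [hi, hj, if_false, or_self, eq_self_iff_true, true_or, if_true, or_true]
      linear_combination scal (Bw i k) (Bw k j)

private lemma correction {n : ℕ} (Bw P : Matrix (Fin n) (Fin n) ℤ) (k : Fin n) :
    colSel P k * mutB Bw k = -(colSel P k * Bw) := by
  ext i j
  rw [Matrix.neg_apply, colSel_mul_apply, colSel_mul_apply]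
  simp [mutB]

/-- first duality: for a totally sign-skew-symmetric matrix `B` and any
mutation sequence `w`, we have `G_w ⬝ B_w = B ⬝ C_w`. -/
theorem first_duality {n : ℕ} (B : Matrix (Fin n) (Fin n) ℤ) (hB : TotSSS B)
    (w : List (Fin n)) :
    Gmat B w * Bmat B w = B * Cmat B w := by
  induction w using List.reverseRecOn with
  | nil => simp [Gmat, Bmat, Cmat, BCG]
  | append_singleton v k ih =>
    have hkk : Bmat B v k k = 0 := by
      have h := hB v k k
      have h2 : Bmat B v k k * Bmat B v k k = 0 :=
        le_antisymm h.1 (mul_self_nonneg _)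
      exact (h.2 h2).1
    set Bw := Bmat B v with hBw
    set Cw := Cmat B v with hCw
    set Gw := Gmat B v with hGw
    have hB' : Bmat B (v ++ [k]) = mutB Bw k := by
      simp [Bmat, BCG, BCGstep, hBw, Bmat]
    have hC' : Cmat B (v ++ [k])
        = Cw * (Jmat n k + rowSel (matPos Bw) k) + colSel (matPos (-Cw)) k * Bw := by
      simp [Cmat, BCG, BCGstep, hBw, hCw, Bmat, Cmat]
    have hG' : Gmat B (v ++ [k])
        = Gw * (Jmat n k + colSel (matPos (-Bw)) k) - B * colSel (matPos (-Cw)) k := by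
      simp [Gmat, BCG, BCGstep, hBw, hCw, hGw, Bmat, Cmat, Gmat]
    rw [hB', hC', hG', Matrix.sub_mul, Matrix.mul_assoc Gw, key_identity Bw k hkk,
      Matrix.mul_assoc B, correction, ← Matrix.mul_assoc Gw, ih]
    noncomm_ring
end

section
/- Let B be a totally sign-skew-symmetric n×n integer matrix satisfying the Assumption. Then for every finite sequence w of mutation indices, (G_w^B)ᵀ · C_w^{−Bᵀ} = I_n, where G_w^B is the G-matrix of B at w and C_w^{−Bᵀ} is the C-matrix of −Bᵀ at w. -/
open Matrix

/-! ### Auxiliary integer identities -/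

/-- `sign(-a) * [a*b]₊ = -(sign(b) * [b*a]₊)`. -/
lemma sign_aux (a b : ℤ) : Int.sign (-a) * max (a*b) 0 = -(Int.sign b * max (b*a) 0) := by
  rcases le_or_gt (a*b) 0 with h | h
  · rw [max_eq_right h, max_eq_right (by rw [mul_comm]; exact h)]
    simp
  · rcases lt_trichotomy a 0 with ha | rfl | ha
    · have hb : b < 0 := by nlinarith
      rw [Int.sign_eq_one_of_pos (by linarith : (0:ℤ) < -a),
          Int.sign_eq_neg_one_of_neg hb, max_eq_left h.le,
          max_eq_left (by rw [mul_comm]; exact h.le)]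
      ring
    · simp at h
    · have hb : 0 < b := by nlinarith
      rw [Int.sign_eq_neg_one_of_neg (by linarith : -a < 0),
          Int.sign_eq_one_of_pos hb, max_eq_left h.le,
          max_eq_left (by rw [mul_comm]; exact h.le)]
      ring

/-- Key identity for matrix mutation: `a·[εb]₊ + [-εa]₊·b = sign(a)·[ab]₊` for `ε = ±1`. -/
lemma mut_key (ε a b : ℤ) (hε : ε = 1 ∨ ε = -1) :
    a * max (ε * b) 0 + max (-ε * a) 0 * b = a.sign * max (a*b) 0 := by
  rcases hε with rfl | rfl
  · rcases lt_trichotomy a 0 with ha | rfl | ha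
    · rw [Int.sign_eq_neg_one_of_neg ha,
        max_eq_left (by linarith : (0:ℤ) ≤ -1 * a)]
      rcases le_or_gt b 0 with hb | hb
      · rw [max_eq_right (by linarith : 1*b ≤ 0), max_eq_left (by nlinarith : (0:ℤ) ≤ a*b)]; ring
      · rw [max_eq_left (by linarith : (0:ℤ) ≤ 1*b), max_eq_right (by nlinarith : a*b ≤ 0)]; ring
    · simp
    · rw [Int.sign_eq_one_of_pos ha, max_eq_right (by linarith : -1 * a ≤ 0)]
      rcases le_or_gt b 0 with hb | hb
      · rw [max_eq_right (by linarith : 1*b ≤ 0), max_eq_right (by nlinarith : a*b ≤ 0)]; ring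
      · rw [max_eq_left (by linarith : (0:ℤ) ≤ 1*b), max_eq_left (by nlinarith : (0:ℤ) ≤ a*b)]; ring
  · rcases lt_trichotomy a 0 with ha | rfl | ha
    · rw [Int.sign_eq_neg_one_of_neg ha,
        max_eq_right (by linarith : -(-1) * a ≤ 0)]
      rcases le_or_gt b 0 with hb | hb
      · rw [max_eq_left (by linarith : (0:ℤ) ≤ -1*b), max_eq_left (by nlinarith : (0:ℤ) ≤ a*b)]; ring
      · rw [max_eq_right (by linarith : -1*b ≤ 0), max_eq_right (by nlinarith : a*b ≤ 0)]; ring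
    · simp
    · rw [Int.sign_eq_one_of_pos ha, max_eq_left (by linarith : (0:ℤ) ≤ -(-1) * a)]
      rcases le_or_gt b 0 with hb | hb
      · rw [max_eq_left (by linarith : (0:ℤ) ≤ -1*b), max_eq_right (by nlinarith : a*b ≤ 0)]; ring
      · rw [max_eq_right (by linarith : -1*b ≤ 0), max_eq_left (by nlinarith : (0:ℤ) ≤ a*b)]; ring

section Aux
variable {n : ℕ}

/-! ### Unfolding the recursion along `w ++ [k]` -/

lemma BCG_append (B : Matrix (Fin n) (Fin n) ℤ) (w : List (Fin n)) (k : Fin n) :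
    BCG B (w ++ [k]) = BCGstep B (BCG B w) k := by
  simp [BCG]

lemma Bmat_nil (B : Matrix (Fin n) (Fin n) ℤ) : Bmat B [] = B := rfl
lemma Cmat_nil (B : Matrix (Fin n) (Fin n) ℤ) : Cmat B [] = 1 := rfl
lemma Gmat_nil (B : Matrix (Fin n) (Fin n) ℤ) : Gmat B [] = 1 := rfl

lemma Bmat_append (B : Matrix (Fin n) (Fin n) ℤ) (w : List (Fin n)) (k : Fin n) :
    Bmat B (w ++ [k]) = mutB (Bmat B w) k := by
  simp [Bmat, BCG_append, BCGstep, Cmat, Gmat]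

lemma Cmat_append (B : Matrix (Fin n) (Fin n) ℤ) (w : List (Fin n)) (k : Fin n) :
    Cmat B (w ++ [k]) = Cmat B w * (Jmat n k + rowSel (matPos (Bmat B w)) k)
      + colSel (matPos (-(Cmat B w))) k * Bmat B w := by
  simp [Bmat, BCG_append, BCGstep, Cmat, Gmat]

lemma Gmat_append (B : Matrix (Fin n) (Fin n) ℤ) (w : List (Fin n)) (k : Fin n) :
    Gmat B (w ++ [k]) = Gmat B w * (Jmat n k + colSel (matPos (-(Bmat B w))) k)
      - B * colSel (matPos (-(Cmat B w))) k := by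
  simp [Bmat, BCG_append, BCGstep, Cmat, Gmat]

/-! ### Mutation commutes with negative transpose -/

lemma mutB_negT (B : Matrix (Fin n) (Fin n) ℤ) (k : Fin n) :
    mutB (-Bᵀ) k = -(mutB B k)ᵀ := by
  ext i j
  simp only [mutB, Matrix.of_apply, Matrix.neg_apply, Matrix.transpose_apply]
  by_cases h : i = k ∨ j = k
  · have h' : j = k ∨ i = k := h.symm
    simp [h, h']
  · have h' : ¬ (j = k ∨ i = k) := fun hc => h hc.symm
    simp only [h, h', if_neg]
    have := sign_aux (B k i) (B j k)
    push_neg at h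
    ring_nf
    ring_nf at this
    simp only [if_false]
    rw [this]
    ring

lemma Bmat_negT (B : Matrix (Fin n) (Fin n) ℤ) (w : List (Fin n)) :
    Bmat (-Bᵀ) w = -(Bmat B w)ᵀ := by
  induction w using List.reverseRecOn with
  | nil => rfl
  | append_singleton w k ih => rw [Bmat_append, Bmat_append, ih, ← mutB_negT]

lemma diag_zero {M : Matrix (Fin n) (Fin n) ℤ} (h : SignSkew M) (k : Fin n) :
    M k k = 0 := by
  have h1 := (h k k).1
  nlinarith [sq_nonneg (M k k)]

/-! ### The one-step simplifications under sign coherence -/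

lemma Cstep (C B1 : Matrix (Fin n) (Fin n) ℤ) (k : Fin n) (ε : ℤ)
    (hc : (ε = 1 ∧ ∀ i, 0 ≤ C i k) ∨ (ε = -1 ∧ ∀ i, C i k ≤ 0)) :
    C * (Jmat n k + rowSel (matPos B1) k) + colSel (matPos (-C)) k * B1
      = C * (Jmat n k + rowSel (matPos (ε • B1)) k) := by
  ext i j
  simp only [Matrix.add_apply, Matrix.mul_apply, Jmat, rowSel, colSel, matPos,
    Matrix.of_apply, Matrix.neg_apply, Matrix.smul_apply, smul_eq_mul,
    mul_add, mul_ite, ite_mul, mul_zero, zero_mul, mul_one, mul_neg,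
    Finset.sum_add_distrib, Finset.sum_ite_eq, Finset.sum_ite_eq',
    Finset.mem_univ, if_true]
  rcases hc with ⟨rfl, hp⟩ | ⟨rfl, hn⟩
  · rw [max_eq_right (neg_nonpos.mpr (hp i)), one_mul]; ring
  · rw [max_eq_left (neg_nonneg.mpr (hn i)),
      (by omega : max (-1 * B1 k j) 0 = max (B1 k j) 0 - B1 k j)]
    ring

lemma Gstep (B C G B1 : Matrix (Fin n) (Fin n) ℤ) (k : Fin n) (ε : ℤ)
    (hc : (ε = 1 ∧ ∀ i, 0 ≤ C i k) ∨ (ε = -1 ∧ ∀ i, C i k ≤ 0))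
    (hBC : B * C = G * B1) :
    G * (Jmat n k + colSel (matPos (-B1)) k) - B * colSel (matPos (-C)) k
      = G * (Jmat n k + colSel (matPos ((-ε) • B1)) k) := by
  ext i j
  simp only [Matrix.sub_apply, Matrix.add_apply, Matrix.mul_apply, Jmat, rowSel, colSel, matPos,
    Matrix.of_apply, Matrix.neg_apply, Matrix.smul_apply, smul_eq_mul,
    mul_add, mul_ite, ite_mul, mul_zero, zero_mul, mul_one, mul_neg,
    Finset.sum_add_distrib, Finset.sum_ite_eq, Finset.sum_ite_eq',
    Finset.mem_univ, if_true]
  by_cases hj : j = k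
  · subst hj
    simp only [if_true]
    rcases hc with ⟨rfl, hp⟩ | ⟨rfl, hn⟩
    · have h1 : ∀ x, (-C x j ⊔ 0) = 0 := fun x => max_eq_right (neg_nonpos.mpr (hp x))
      simp [h1, neg_one_mul]
    · have h1 : ∀ x, (-C x j ⊔ 0) = -C x j := fun x => max_eq_left (neg_nonneg.mpr (hn x))
      have h2 := congrFun (congrFun hBC i) j
      simp only [Matrix.mul_apply] at h2
      simp only [h1, mul_neg, Finset.sum_neg_distrib, sub_neg_eq_add, h2]
      rw [add_assoc, ← Finset.sum_add_distrib]
      congr 1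
      refine Finset.sum_congr rfl fun x _ => ?_
      rw [← mul_add, (by omega : (-B1 x j ⊔ 0) + B1 x j = B1 x j ⊔ 0),
        (by norm_num : -(-1:ℤ) * B1 x j = B1 x j)]
  · simp [hj]

/-- Matrix mutation as a two-sided multiplication, for `ε = ±1`. -/
lemma mut_identity (B1 : Matrix (Fin n) (Fin n) ℤ) (k : Fin n) (ε : ℤ)
    (hε : ε = 1 ∨ ε = -1) (hkk : B1 k k = 0) :
    B1 * (Jmat n k + rowSel (matPos (ε • B1)) k)
      = (Jmat n k + colSel (matPos ((-ε) • B1)) k) * mutB B1 k := by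
  ext i j
  simp only [Matrix.add_apply, Matrix.mul_apply, Jmat, rowSel, colSel, matPos,
    Matrix.of_apply, Matrix.smul_apply, smul_eq_mul,
    mul_add, add_mul, mul_ite, ite_mul, mul_zero, zero_mul, mul_one, one_mul, mul_neg, neg_mul,
    Finset.sum_add_distrib, Finset.sum_ite_eq, Finset.sum_ite_eq',
    Finset.mem_univ, if_true]
  by_cases hi : i = k <;> by_cases hj : j = k
  · subst hi; subst hj
    simp [mutB, hkk]
  · subst hi
    simp [mutB, hj, hkk]
  · subst hj
    simp [mutB, hi, hkk]
  · simp only [mutB, Matrix.of_apply, if_neg hj, if_neg hi,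
      if_neg (not_or.mpr ⟨hi, hj⟩), if_pos (Or.inr rfl), mul_neg]
    have hk := mut_key ε (B1 i k) (B1 k j) hε
    have : -(ε * B1 i k) = -ε * B1 i k := by ring
    rw [this]
    simp only [true_or, if_true]
    linarith [hk]

lemma invol (A : Matrix (Fin n) (Fin n) ℤ) (k : Fin n) (hkk : A k k = 0) :
    (Jmat n k + rowSel A k) * (Jmat n k + rowSel A k) = 1 := by
  ext i j
  simp only [Matrix.add_apply, Matrix.mul_apply, Jmat, rowSel,
    Matrix.of_apply, Matrix.one_apply,
    mul_add, add_mul, mul_ite, ite_mul, mul_zero, zero_mul, mul_one, one_mul, mul_neg, neg_mul,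
    Finset.sum_add_distrib, Finset.sum_ite_eq, Finset.sum_ite_eq',
    Finset.mem_univ, if_true]
  by_cases hi : i = k <;> by_cases hj : j = k <;>
    simp [hi, hj, hkk] <;> split_ifs <;> simp_all

lemma JcolT (A : Matrix (Fin n) (Fin n) ℤ) (k : Fin n) :
    (Jmat n k + colSel A k)ᵀ = Jmat n k + rowSel Aᵀ k := by
  ext i j
  simp only [Matrix.transpose_apply, Matrix.add_apply, Jmat, rowSel, colSel, Matrix.of_apply]
  by_cases hi : i = j
  · subst hi; simp
  · have hj : ¬ j = i := fun h => hi h.symm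
    simp [hi, hj]

lemma matPosT (B1 : Matrix (Fin n) (Fin n) ℤ) (ε : ℤ) :
    (matPos ((-ε) • B1))ᵀ = matPos (ε • (-B1ᵀ)) := by
  ext i j
  simp only [Matrix.transpose_apply, matPos, Matrix.of_apply, Matrix.smul_apply,
    Matrix.neg_apply, smul_eq_mul]
  ring_nf

/-! ### Main induction -/

lemma duality_aux (B : Matrix (Fin n) (Fin n) ℤ) (hB : TotSSS B)
    (hA : TheAssumption B) (w : List (Fin n)) :
    B * Cmat B w = Gmat B w * Bmat B w ∧ (Gmat B w)ᵀ * Cmat (-Bᵀ) w = 1 := by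
  induction w using List.reverseRecOn with
  | nil => simp [Bmat_nil, Cmat_nil, Gmat_nil]
  | append_singleton w k ih =>
    obtain ⟨hBC, hGC⟩ := ih
    obtain ⟨ε, hCs, hCs'⟩ := hA B (Or.inl ⟨[], rfl⟩) w k
    have hε : ε = 1 ∨ ε = -1 := by
      rcases hCs.2 with ⟨h, -⟩ | ⟨h, -⟩
      · exact Or.inl h
      · exact Or.inr h
    have hkk : Bmat B w k k = 0 := diag_zero (hB w) k
    have hB1' : Bmat (-Bᵀ) w = -(Bmat B w)ᵀ := Bmat_negT B w
    have hkk' : Bmat (-Bᵀ) w k k = 0 := by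
      rw [hB1']; simp [hkk]
    have hC1 : Cmat B (w ++ [k])
        = Cmat B w * (Jmat n k + rowSel (matPos (ε • Bmat B w)) k) := by
      rw [Cmat_append]; exact Cstep _ _ _ _ hCs.2
    have hC1' : Cmat (-Bᵀ) (w ++ [k])
        = Cmat (-Bᵀ) w * (Jmat n k + rowSel (matPos (ε • Bmat (-Bᵀ) w)) k) := by
      rw [Cmat_append]; exact Cstep _ _ _ _ hCs'.2
    have hG1 : Gmat B (w ++ [k])
        = Gmat B w * (Jmat n k + colSel (matPos ((-ε) • Bmat B w)) k) := by
      rw [Gmat_append]; exact Gstep _ _ _ _ _ _ hCs.2 hBC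
    have hT : (Jmat n k + colSel (matPos ((-ε) • Bmat B w)) k)ᵀ
        = Jmat n k + rowSel (matPos (ε • Bmat (-Bᵀ) w)) k := by
      rw [JcolT, matPosT, hB1']
    constructor
    · rw [hC1, hG1, Bmat_append, ← mul_assoc, hBC, mul_assoc,
        mut_identity (Bmat B w) k ε hε hkk, ← mul_assoc]
    · have hz : matPos (ε • Bmat (-Bᵀ) w) k k = 0 := by
        simp [matPos, hkk']
      rw [hG1, hC1', Matrix.transpose_mul, hT, mul_assoc,
        ← mul_assoc (Gmat B w)ᵀ, hGC, one_mul, invol _ _ hz]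

end Aux
/-- second duality: under the Assumption,
`(G_w^B)ᵀ ⬝ C_w^{-Bᵀ} = I_n` for every mutation sequence `w`. -/
theorem second_duality {n : ℕ} (B : Matrix (Fin n) (Fin n) ℤ) (hB : TotSSS B)
    (hA : TheAssumption B) (w : List (Fin n)) :
    (Gmat B w)ᵀ * Cmat (-Bᵀ) w = 1 := by
  exact (duality_aux B hB hA w).2
end

section
/- Let B be a sign-skew-symmetric n×n integer matrix and k an index. Then the piecewise linear maps η_{B,k} and η_{μ_k(B),k} are mutually inverse: η_{μ_k(B),k} ∘ η_{B,k} = id_{ℝ^n} and η_{B,k} ∘ η_{μ_k(B),k} = id_{ℝ^n}. -/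
open Matrix

open Classical in
/-- The piecewise linear map `η_{B,k} : ℝ^n → ℝ^n`. -/
noncomputable def eta {n : ℕ} (B : Matrix (Fin n) (Fin n) ℤ) (k : Fin n)
    (v : Fin n → ℝ) : Fin n → ℝ :=
  if 0 ≤ v k then ((Jmat n k + colSel (matPos B) k).map (Int.cast : ℤ → ℝ)) *ᵥ v
  else ((Jmat n k + colSel (matPos (-B)) k).map (Int.cast : ℤ → ℝ)) *ᵥ v

lemma hJdiag {n : ℕ} (k : Fin n) :
    Jmat n k = Matrix.diagonal (fun i => if i = k then -1 else 1) := by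
  ext i j; simp [Jmat, Matrix.diagonal]

lemma key {n : ℕ} (k : Fin n) (A : Matrix (Fin n) (Fin n) ℤ) (hA : A k k = 0) :
    (Jmat n k + colSel A k) * (Jmat n k + colSel A k) = 1 := by
  have h1 : Jmat n k * Jmat n k = 1 := by
    rw [hJdiag, Matrix.diagonal_mul_diagonal]
    ext i j
    by_cases h : i = k <;> simp [Matrix.diagonal, Matrix.one_apply, h]
  have h2 : Jmat n k * colSel A k = colSel A k := by
    rw [hJdiag]; ext i j
    rcases eq_or_ne i k with h | h <;> rcases eq_or_ne j k with h' | h' <;>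
      simp [Matrix.diagonal_mul, colSel, h, h', hA]
  have h3 : colSel A k * Jmat n k = - colSel A k := by
    rw [hJdiag]; ext i j
    rcases eq_or_ne j k with h | h <;> simp [Matrix.mul_diagonal, colSel, h]
  have h4 : colSel A k * colSel A k = 0 := by
    ext i j
    simp only [Matrix.mul_apply, colSel, Matrix.of_apply, Matrix.zero_apply]
    rw [Finset.sum_eq_zero]
    intro l _
    rcases eq_or_ne l k with h | h <;> simp [h, hA]
    rintro rfl; exact Or.inr hA
  rw [add_mul, mul_add, mul_add, h1, h2, h3, h4]
  abel

lemma keyR {n : ℕ} (k : Fin n) (A : Matrix (Fin n) (Fin n) ℤ) (hA : A k k = 0)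
    (v : Fin n → ℝ) :
    ((Jmat n k + colSel A k).map (Int.cast : ℤ → ℝ)) *ᵥ
      (((Jmat n k + colSel A k).map (Int.cast : ℤ → ℝ)) *ᵥ v) = v := by
  rw [Matrix.mulVec_mulVec, show (Int.cast : ℤ → ℝ) = ⇑(Int.castRingHom ℝ) from rfl,
    ← Matrix.map_mul, key k A hA]
  simp

lemma etaMk {n : ℕ} (k : Fin n) (A : Matrix (Fin n) (Fin n) ℤ) (hA : A k k = 0)
    (v : Fin n → ℝ) :
    (((Jmat n k + colSel A k).map (Int.cast : ℤ → ℝ)) *ᵥ v) k = -v k := by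
  simp only [Matrix.mulVec, dotProduct, Matrix.map_apply, Matrix.add_apply,
    Jmat, colSel, Matrix.of_apply]
  rw [Finset.sum_eq_single k]
  · simp [hA]
  · intro l _ hl; simp [hl, Ne.symm hl]
  · simp

lemma etaFix {n : ℕ} (k : Fin n) (A : Matrix (Fin n) (Fin n) ℤ)
    (v : Fin n → ℝ) (hv : v k = 0) :
    ((Jmat n k + colSel A k).map (Int.cast : ℤ → ℝ)) *ᵥ v = v := by
  funext i
  simp only [Matrix.mulVec, dotProduct, Matrix.map_apply, Matrix.add_apply,
    Jmat, colSel, Matrix.of_apply]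
  rw [Finset.sum_eq_single i]
  · rcases eq_or_ne i k with h | h <;> simp [h, hv]
  · intro l _ hl
    rcases eq_or_ne l k with h | h <;> simp [Ne.symm hl, h, hv]
  · simp

lemma comp_aux {n : ℕ} (k : Fin n) (A0 A1 : Matrix (Fin n) (Fin n) ℤ)
    (h0 : A0 k k = 0) (h1 : A1 k k = 0) (v : Fin n → ℝ) :
    (fun w : Fin n → ℝ => if 0 ≤ w k
        then ((Jmat n k + colSel A1 k).map (Int.cast : ℤ → ℝ)) *ᵥ w
        else ((Jmat n k + colSel A0 k).map (Int.cast : ℤ → ℝ)) *ᵥ w)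
      (if 0 ≤ v k then ((Jmat n k + colSel A0 k).map (Int.cast : ℤ → ℝ)) *ᵥ v
        else ((Jmat n k + colSel A1 k).map (Int.cast : ℤ → ℝ)) *ᵥ v) = v := by
  beta_reduce
  rcases lt_trichotomy (v k) 0 with h | h | h
  · rw [if_neg (not_le.2 h), if_pos (by rw [etaMk k A1 h1]; linarith)]
    exact keyR k A1 h1 v
  · rw [if_pos (le_of_eq h.symm), etaFix k A0 v h, if_pos (le_of_eq h.symm),
      etaFix k A1 v h]
  · rw [if_pos h.le, if_neg (by rw [etaMk k A0 h0]; intro hc; linarith)]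
    exact keyR k A0 h0 v

/-- the maps `η_{B,k}` and `η_{μ_k(B),k}` are mutually inverse. -/
theorem eta_inverse {n : ℕ} (B : Matrix (Fin n) (Fin n) ℤ) (hB : SignSkew B) (k : Fin n) :
    eta (mutB B k) k ∘ eta B k = id ∧ eta B k ∘ eta (mutB B k) k = id := by
  have hBkk : B k k = 0 := ((hB k k).2 (le_antisymm (hB k k).1 (mul_self_nonneg _))).1
  have hP0 : matPos B k k = 0 := by simp [matPos, hBkk]
  have hP1 : matPos (-B) k k = 0 := by simp [matPos, hBkk]
  have hc0 : colSel (matPos (mutB B k)) k = colSel (matPos (-B)) k := by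
    ext i j; rcases eq_or_ne j k with h | h <;> simp [colSel, matPos, mutB, h]
  have hc1 : colSel (matPos (-(mutB B k))) k = colSel (matPos B) k := by
    ext i j; rcases eq_or_ne j k with h | h <;> simp [colSel, matPos, mutB, h]
  constructor <;> funext v <;>
    simp only [Function.comp_apply, id_eq, eta, hc0, hc1]
  · exact comp_aux k (matPos B) (matPos (-B)) hP0 hP1 v
  · exact comp_aux k (matPos (-B)) (matPos B) hP1 hP0 v
end
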